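/- Let D be a finitely generated abelian group, H ≤ D a subgroup of finite index, and S a D-graded commutative ring. Then S is integral over the Veronese subring S_H = ⊕_{d∈H} S_d, i.e., every element of S is integral over S_H. -/
import Mathlib


/-- The Veronese subring `S_H = ⊕_{d ∈ H} S_d` of a `D`-graded ring `S` with respect to a
subgroup `H ≤ D`: the subring generated by the homogeneous elements whose degree lies in `H`
(equivalently, the set of elements all of whose homogeneous components have degree in `H`). -/
def veroneseSubring {D S : Type*} [AddCommGroup D] [CommRing S]
    (𝒜 : D → AddSubgroup S) (H : AddSubgroup D) : Subring S :=
  Subring.closure (⋃ d ∈ H, (𝒜 d : Set S))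

/-- Let `D` be a finitely generated abelian group, `H ≤ D` a subgroup of finite
index and `S` a `D`-graded commutative ring.  Then `S` is integral over the Veronese subring
`S_H = ⊕_{d ∈ H} S_d`. -/
theorem stmt_7 {D S : Type*} [AddCommGroup D] [AddGroup.FG D] [DecidableEq D] [CommRing S]
    (𝒜 : D → AddSubgroup S) [GradedRing 𝒜]
    (H : AddSubgroup D) (hH : H.FiniteIndex) :
    ∀ s : S, IsIntegral (veroneseSubring 𝒜 H) s := by
  intro s
  set R := veroneseSubring 𝒜 H
  -- reduce to membership in the integral closure
  classical
  suffices h : s ∈ integralClosure R S from h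
  rw [← DirectSum.sum_support_decompose 𝒜 s]
  refine sum_mem fun d _ => ?_
  -- homogeneous component x ∈ 𝒜 d
  set x : S := (DirectSum.decompose 𝒜 s d : S) with hx
  have hxd : x ∈ 𝒜 d := SetLike.coe_mem _
  have : Finite (D ⧸ H) := Nat.finite_of_card_ne_zero hH.index_ne_zero
  set n := H.index with hn
  have hn0 : n ≠ 0 := hH.index_ne_zero
  have hnd : n • d ∈ H := by
    have : n • (QuotientAddGroup.mk d : D ⧸ H) = 0 := by
      show H.index • (QuotientAddGroup.mk d : D ⧸ H) = 0
      rw [AddSubgroup.index]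
      exact card_nsmul_eq_zero'
    rwa [← QuotientAddGroup.mk_nsmul, QuotientAddGroup.eq_zero_iff] at this
  have hxn : x ^ n ∈ 𝒜 (n • d) := SetLike.pow_mem_graded n hxd
  have hxnR : x ^ n ∈ R :=
    Subring.subset_closure (Set.mem_biUnion hnd hxn)
  refine ⟨Polynomial.X ^ n - Polynomial.C (⟨x ^ n, hxnR⟩ : R), ?_, ?_⟩
  · exact Polynomial.monic_X_pow_sub_C _ hn0
  · rw [Polynomial.eval₂_sub, Polynomial.eval₂_X_pow, Polynomial.eval₂_C]
    exact sub_self (x ^ n)
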